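/- arXiv:2012.14432 — 3 statements merged into one kernel-verified Lean document; each statement's English description precedes it below -/
import Mathlib

section
/- In a static game (T = 1) with no strategically equivalent actions, action a' locally e-dominates action a at h if and only if a' locally obviously dominates a at h. -/
/-- An abstract finite multistage game with perfect recall, from player i's
perspective, enriched with the two primitives used for local end-dominance:
`ends h a e` holds when choosing action `a` at information set `h` against the
opponents' profile/state `e` terminates the game for player i (no active
information set of i strictly between `h` and the induced terminal history), and
`Mimicks h sb si C` holds when the continuation plan `sb` mimicks the plan `si`
given `h` under the scenario `C ⊆ S_{-i}(h)` (same actions at same-stage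
information sets from the first active information set following `h`). -/
structure EGame where
  Strat : Type
  Env : Type
  Info : Type
  Act : Type
  u : Strat → Env → ℝ
  act : Strat → Info → Act
  reachesI : Info → Set Strat
  reachesE : Info → Set Env
  avail : Info → Set Act
  active : Strat → Set Info
  ends : Info → Act → Env → Prop
  Mimicks : Info → Strat → Strat → Set Env → Prop
  active_mem : ∀ s h, h ∈ active s → s ∈ reachesI h
  act_avail : ∀ s h, s ∈ reachesI h → act s h ∈ avail h

namespace EGame

variable (G : EGame)

/-- `S_i(h,a)`: strategies of i reaching `h` and choosing `a` at `h`. -/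
def SiAt (h : G.Info) (a : G.Act) : Set G.Strat :=
  {s | s ∈ G.reachesI h ∧ G.act s h = a}

/-- `S_{-i}^{a,h}`: opponents' profiles in S_{-i}(h) that terminate the game for i
after she chooses `a` at `h`. -/
def TermSet (h : G.Info) (a : G.Act) : Set G.Env :=
  {e | e ∈ G.reachesE h ∧ G.ends h a e}

/-- The cells of the ending partition 𝒮(h,a',a). -/
def EndingCells (h : G.Info) (a' a : G.Act) : Set (Set G.Env) :=
  { G.TermSet h a' ∩ G.TermSet h a,
    G.TermSet h a \ G.TermSet h a',
    G.TermSet h a' \ G.TermSet h a,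
    G.reachesE h \ (G.TermSet h a' ∪ G.TermSet h a) }

/-- The scenario `C` is irrelevant for the ordered pair (a',a) at `h`: every
continuation plan after `a` is mimicked by some plan after `a'` yielding exactly
the same outcome against every profile in `C`. -/
def Irrelevant (h : G.Info) (a' a : G.Act) (C : Set G.Env) : Prop :=
  ∀ si ∈ G.SiAt h a, ∃ sb ∈ G.SiAt h a',
    G.Mimicks h sb si C ∧ ∀ e ∈ C, G.u sb e = G.u si e

/-- a' locally end-dominates a at h: for every relevant cell of the ending
partition, every continuation plan after `a` is beaten (min ≥ max over the cell,
stated pointwise) by some mimicking continuation plan after `a'`. -/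
def EDom (h : G.Info) (a' a : G.Act) : Prop :=
  ∀ C ∈ G.EndingCells h a' a, ¬ G.Irrelevant h a' a C →
    ∀ si ∈ G.SiAt h a, ∃ sb ∈ G.SiAt h a',
      G.Mimicks h sb si C ∧ ∀ e ∈ C, ∀ e' ∈ C, G.u sb e ≥ G.u si e'

/-- a' locally obviously dominates a at h. -/
def LODom (h : G.Info) (a' a : G.Act) : Prop :=
  ∀ si ∈ G.SiAt h a, ∃ sb ∈ G.SiAt h a',
    ∀ e ∈ G.reachesE h, ∀ e' ∈ G.reachesE h, G.u sb e ≥ G.u si e'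

/-- a' wishfully dominates a at h (best payoffs compared contingency by
contingency, stated in attained form). -/
def WishfulDom (h : G.Info) (a' a : G.Act) : Prop :=
  ∀ e ∈ G.reachesE h, ∀ si ∈ G.SiAt h a, ∃ sb ∈ G.SiAt h a', G.u sb e ≥ G.u si e

/-- `sb` is a weakly dominant strategy. -/
def WeaklyDominant (sb : G.Strat) : Prop := ∀ si, ∀ e, G.u sb e ≥ G.u si e

/-- Actions a' and a are strategically equivalent at h: they induce the same payoff
for i against every profile consistent with h. -/
def StratEquiv (h : G.Info) (a' a : G.Act) : Prop :=
  ∀ si ∈ G.SiAt h a, ∀ sb ∈ G.SiAt h a', ∀ e ∈ G.reachesE h, G.u sb e = G.u si e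

end EGame

/-- in a static game (T = 1: every action terminates the game for i,
payoffs depend only on the action chosen at h, and mimicking is vacuous) with no
strategically equivalent actions, a' locally e-dominates a at h iff a' locally
obviously dominates a at h. -/
theorem EGame.static_eDom_iff_lodom (G : EGame) (h : G.Info) (a' a : G.Act)
    (hstatic : ∀ (b : G.Act), ∀ e ∈ G.reachesE h, G.ends h b e)
    (hpay : ∀ b : G.Act, ∀ s ∈ G.SiAt h b, ∀ s' ∈ G.SiAt h b,
      ∀ e ∈ G.reachesE h, G.u s e = G.u s' e)
    (hmim : ∀ (sb si : G.Strat) (C : Set G.Env), G.Mimicks h sb si C)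
    (hne : (G.SiAt h a).Nonempty) (hne' : (G.SiAt h a').Nonempty)
    (hnse : ¬ G.StratEquiv h a' a) :
    G.EDom h a' a ↔ G.LODom h a' a := by
  have hterm : ∀ b : G.Act, G.TermSet h b = G.reachesE h := by
    intro b
    ext e
    exact ⟨fun he => he.1, fun he => ⟨he, hstatic b e he⟩⟩
  constructor
  · intro hE si hsi
    have hmemC : G.reachesE h ∈ G.EndingCells h a' a := by
      have : G.TermSet h a' ∩ G.TermSet h a = G.reachesE h := by
        rw [hterm, hterm, Set.inter_self]
      rw [EGame.EndingCells, ← this]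
      exact Set.mem_insert _ _
    have hnotirr : ¬ G.Irrelevant h a' a (G.reachesE h) := by
      intro hirr
      apply hnse
      intro si hsi sb hsb e he
      obtain ⟨sb0, hsb0, _, heq⟩ := hirr si hsi
      calc G.u sb e = G.u sb0 e := hpay a' sb hsb sb0 hsb0 e he
        _ = G.u si e := heq e he
    obtain ⟨sb, hsb, _, hineq⟩ := hE _ hmemC hnotirr si hsi
    exact ⟨sb, hsb, fun e he e' he' => hineq e he e' he'⟩
  · intro hL C hC _ si hsi
    obtain ⟨sb, hsb, hineq⟩ := hL si hsi
    have hCsub : C ⊆ G.reachesE h := by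
      rcases hC with h1 | h1 | h1 | h1 <;> subst h1
      · rw [hterm]; exact Set.inter_subset_left
      · rw [hterm]; exact Set.diff_subset
      · rw [hterm]; exact Set.diff_subset
      · exact Set.diff_subset
    exact ⟨sb, hsb, hmim sb si C, fun e he e' he' =>
      hineq e (hCsub he) e' (hCsub he')⟩
end

section
/- A static game with no strategically equivalent actions is obviously strategy-proof if and only if it is locally strategy-proof under local e-dominance. -/
/-- A static game (a multistage game with T = 1): nature draws a state θ, each
player i observes `obs i θ`, and all players simultaneously choose an action.
`U i θ aprof` is i's payoff (outcome utility) at the terminal history (θ, aprof). -/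
structure StaticGame where
  ι : Type
  Θ : Type
  A : ι → Type
  Obs : ι → Type
  obs : (i : ι) → Θ → Obs i
  U : (i : ι) → Θ → ((j : ι) → A j) → ℝ

namespace StaticGame

open Classical

variable (G : StaticGame)

/-- A (reduced) strategy of player i: an action at each information set. -/
def Strategy (i : G.ι) : Type := G.Obs i → G.A i

/-- The action profile when player i plays action `a` and every other player j
follows the strategy `s j`, in state θ. -/
noncomputable def playAct (i : G.ι) (a : G.A i) (θ : G.Θ) (s : ∀ j, G.Strategy j) :
    ∀ j, G.A j :=
  fun j => if h : j = i then cast (congrArg G.A h).symm a else s j (G.obs j θ)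

/-- Payoff to i when she follows strategy si and opponents follow s, in state θ. -/
noncomputable def payoff (i : G.ι) (si : G.Strategy i) (θ : G.Θ) (s : ∀ j, G.Strategy j) : ℝ :=
  G.U i θ (G.playAct i (si (G.obs i θ)) θ s)

/-- `si` is obviously dominant for i: at every point of departure (information set
`o` where `si` and the alternative differ), the worst payoff under `si` over
S_{-i}(o) is at least the best payoff under the alternative over S_{-i}(o). -/
def ObviouslyDominant (i : G.ι) (si : G.Strategy i) : Prop :=
  ∀ si' : G.Strategy i, ∀ o : G.Obs i, si o ≠ si' o →
    ∀ θ θ' : G.Θ, ∀ s s' : ∀ j, G.Strategy j,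
      G.obs i θ = o → G.obs i θ' = o →
        G.payoff i si θ s ≥ G.payoff i si' θ' s'

/-- Actions a' and a are strategically equivalent at the information set `o` of i. -/
def StratEquivAt (i : G.ι) (o : G.Obs i) (a' a : G.A i) : Prop :=
  ∀ θ : G.Θ, ∀ s : ∀ j, G.Strategy j, G.obs i θ = o →
    G.U i θ (G.playAct i a' θ s) = G.U i θ (G.playAct i a θ s)

/-- a' locally obviously dominates a at the information set `o` of i. -/
def LODomAt (i : G.ι) (o : G.Obs i) (a' a : G.A i) : Prop :=
  ∀ θ θ' : G.Θ, ∀ s s' : ∀ j, G.Strategy j,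
    G.obs i θ = o → G.obs i θ' = o →
      G.U i θ (G.playAct i a' θ s) ≥ G.U i θ' (G.playAct i a θ' s')

/-- a' locally e-dominates a at `o`: in a static game, the ending partition is the
trivial partition, mimicking is vacuous, and irrelevance of the unique scenario
amounts to strategic equivalence of the two actions; so on the relevant scenario
the min–max comparison must hold. -/
def EDomAt (i : G.ι) (o : G.Obs i) (a' a : G.A i) : Prop :=
  ¬ G.StratEquivAt i o a' a → G.LODomAt i o a' a

/-- a static game with no strategically equivalent actions is
obviously strategy-proof (every player has an obviously dominant strategy) iff it
is locally strategy-proof under local e-dominance (every player has a locally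
e-dominant action at each of her information sets). -/
theorem obviouslySP_iff_locallySP_eDom (G : StaticGame)
    (hnse : ∀ (i : G.ι) (o : G.Obs i) (a' a : G.A i),
      a' ≠ a → ¬ G.StratEquivAt i o a' a) :
    (∀ i : G.ι, ∃ si : G.Strategy i, G.ObviouslyDominant i si) ↔
    (∀ i : G.ι, ∀ o : G.Obs i, ∃ a' : G.A i,
      ∀ a : G.A i, a ≠ a' → G.EDomAt i o a' a) := by
  constructor
  · rintro h i o
    obtain ⟨si, hsi⟩ := h i
    refine ⟨si o, fun a ha _ θ θ' s s' hθ hθ' => ?_⟩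
    classical
    set si' : G.Strategy i := fun o' => if o' = o then a else si o' with hsi'
    have hdiff : si o ≠ si' o := by simp [hsi', ha.symm]
    have := hsi si' o hdiff θ θ' s s' hθ hθ'
    unfold payoff at this
    rw [hθ, hθ'] at this
    simpa [hsi'] using this
  · rintro h i
    choose f hf using h i
    refine ⟨fun o => f o, fun si' o hdiff θ θ' s s' hθ hθ' => ?_⟩
    have hne : si' o ≠ f o := fun e => hdiff (e.symm)
    have hlod : G.LODomAt i o (f o) (si' o) :=
      hf o (si' o) hne (hnse i o (f o) (si' o) (Ne.symm hne))
    have := hlod θ θ' s s' hθ hθ'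
    unfold payoff
    rw [hθ, hθ']
    exact this

end StaticGame
end

section
/- In the direct Top Trading Cycles mechanism with N ≥ 4 items, there exist a true ranking r of player i and an alternative ranking r̃ such that no subset S̄_{-i} ⊆ S_{-i} is irrelevant for (r,r̃) and simultaneously satisfies the min–max dominance condition over the complement. Concretely: with items a ≻ b ≻ c ≻ d, player i owning d, rankings r¹ = (a,b,c,d) and r² = (b,a,d,c), and opponent profiles s^b (i gets b under both), s^d (i gets d under both), s^a (i gets a under r¹ but b under r²), s^c (i gets c under r¹ but d under r²), no bipartition of contingencies into an irrelevant set and a complement over which min payoff of r¹ exceeds max payoff of r² exists. -/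
/-- in the direct Top Trading Cycles mechanism with N ≥ 4 items
(here the four distinct items a ≻ b ≻ c ≻ d of player i's true preference, player i
owning d), with the true ranking r¹ = (a,b,c,d) and the alternative ranking
r² = (b,a,d,c), and opponents' profiles
s^b (i gets b under both rankings), s^d (i gets d under both),
s^a (i gets a under r¹ but b under r²), s^c (i gets c under r¹ but d under r²)
— which exist in the TTC mechanism and are taken as hypotheses — there is no subset
S̄₋ᵢ of opponents' profiles that is irrelevant for (r¹,r²) (i gets the same item
under both rankings against every profile in S̄₋ᵢ) and such that over the
complement the min payoff of r¹ weakly exceeds the max payoff of r². -/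
theorem directTTC_no_irrelevant_bipartition
    {Env Rank Item : Type} (alloc : Rank → Env → Item) (u : Item → ℝ)
    (a b c d : Item) (r1 r2 : Rank)
    (hab : u a > u b) (hbc : u b > u c) (hcd : u c > u d)
    (sb sd sa sc : Env)
    (hb1 : alloc r1 sb = b) (hb2 : alloc r2 sb = b)
    (hd1 : alloc r1 sd = d) (hd2 : alloc r2 sd = d)
    (ha1 : alloc r1 sa = a) (ha2 : alloc r2 sa = b)
    (hc1 : alloc r1 sc = c) (hc2 : alloc r2 sc = d) :
    ¬ ∃ SBar : Set Env,
        (∀ e ∈ SBar, alloc r1 e = alloc r2 e) ∧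
        (∀ e ∉ SBar, ∀ e' ∉ SBar, u (alloc r1 e) ≥ u (alloc r2 e')) := by
  rintro ⟨S, hIrr, hDom⟩
  have hsa : sa ∉ S := fun h => absurd (hIrr sa h) (by rw [ha1, ha2]; intro h'; rw [h'] at hab; linarith)
  have hsc : sc ∉ S := fun h => absurd (hIrr sc h) (by rw [hc1, hc2]; intro h'; rw [h'] at hcd; linarith)
  have := hDom sc hsc sa hsa
  rw [hc1, ha2] at this
  linarith
end
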